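/- arXiv:1606.08601 — 2 statements merged into one kernel-verified Lean document; each statement's English description precedes it below -/
import Mathlib

section
/- Let k, k' : M × M × (0,∞) → (0,∞) be positive kernels. Suppose there exist 0 < α < β < 1, constants C₁, C₂, C₃, C₄ > 0, and a kernel family k_θ (θ ∈ [0,1]) with k₀ = k, k₁ = k', satisfying the interpolation inequality k_θ ≤ k^{1−θ} (k')^{θ} pointwise for every θ ∈ [0,1], along with C₁ k ≤ k_α ≤ C₂ k and C₃ k' ≤ k_β ≤ C₄ k'. Then there exist constants c, C > 0 with c k ≤ k' ≤ C k pointwise. -/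
/-! The interpolation inequality at `θ = α`, combined with `C₁ k ≤ k_α`, gives
`C₁ ≤ (k' / k) ^ α`; at `θ = β`, combined with `C₃ k' ≤ k_β`, it gives `C₃ ≤ (k / k') ^ (1 - β)`.
Taking roots bounds the ratio `k' / k` from both sides. -/

namespace Real

lemma rpow_inv_mul_le_of_mul_le_rpow_mul_rpow {C a b θ : ℝ} (hθ : 0 < θ) (hC : 0 ≤ C)
    (ha : 0 < a) (hb : 0 ≤ b) (h : C * a ≤ a ^ (1 - θ) * b ^ θ) : C ^ θ⁻¹ * a ≤ b := by
  have hratio : C ≤ (b / a) ^ θ := by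
    have hsplit : a ^ (1 - θ) * b ^ θ = (b / a) ^ θ * a := by
      rw [div_rpow hb ha.le, rpow_sub ha, rpow_one]
      field_simp
    exact le_of_mul_le_mul_right (hsplit ▸ h) ha
  calc C ^ θ⁻¹ * a ≤ ((b / a) ^ θ) ^ θ⁻¹ * a := by gcongr
    _ = b := by rw [rpow_rpow_inv (div_nonneg hb ha.le) hθ.ne', div_mul_cancel₀ b ha.ne']

lemma rpow_one_sub_inv_mul_le_of_mul_le_rpow_mul_rpow {C a b θ : ℝ} (hθ : θ < 1) (hC : 0 ≤ C)
    (ha : 0 ≤ a) (hb : 0 < b) (h : C * b ≤ a ^ (1 - θ) * b ^ θ) : C ^ (1 - θ)⁻¹ * b ≤ a :=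
  rpow_inv_mul_le_of_mul_le_rpow_mul_rpow (sub_pos.mpr hθ) hC hb ha <| by
    rwa [sub_sub_cancel, mul_comm (b ^ θ)]

end Real

theorem endpoints_equivalent_of_interpolation_general
    {M : Type*} (k k' : M → M → ℝ → ℝ) (kfam : ℝ → M → M → ℝ → ℝ)
    (α β C₁ C₃ : ℝ)
    (hα : 0 < α) (hαβ : α < β) (hβ : β < 1)
    (hC₁ : 0 < C₁) (hC₃ : 0 < C₃)
    (hk_pos : ∀ x y t, 0 < t → 0 < k x y t)
    (hk'_pos : ∀ x y t, 0 < t → 0 < k' x y t)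
    (hinterp : ∀ θ : ℝ, 0 ≤ θ → θ ≤ 1 → ∀ x y t, 0 < t →
      kfam θ x y t ≤ (k x y t) ^ (1 - θ) * (k' x y t) ^ θ)
    (hαlow : ∀ x y t, 0 < t → C₁ * k x y t ≤ kfam α x y t)
    (hβlow : ∀ x y t, 0 < t → C₃ * k' x y t ≤ kfam β x y t) :
    ∃ c C : ℝ, 0 < c ∧ 0 < C ∧
      ∀ x y t, 0 < t → c * k x y t ≤ k' x y t ∧ k' x y t ≤ C * k x y t := by
  refine ⟨C₁ ^ α⁻¹, (C₃ ^ (1 - β)⁻¹)⁻¹, by positivity, by positivity, fun x y t ht => ⟨?_, ?_⟩⟩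
  · exact Real.rpow_inv_mul_le_of_mul_le_rpow_mul_rpow hα hC₁.le (hk_pos x y t ht)
      (hk'_pos x y t ht).le <|
      (hαlow x y t ht).trans (hinterp α hα.le (by linarith) x y t ht)
  · rw [le_inv_mul_iff₀ (by positivity)]
    exact Real.rpow_one_sub_inv_mul_le_of_mul_le_rpow_mul_rpow hβ hC₃.le (hk_pos x y t ht).le
      (hk'_pos x y t ht) <|
      (hβlow x y t ht).trans (hinterp β (by linarith) hβ.le x y t ht)

/-- Lemma "global-eq": Given an interpolating family `k_θ` with
`k_0 = k`, `k_1 = k'`, `k_θ ≤ k^{1−θ} (k')^{θ}` pointwise for all `θ ∈ [0,1]`, and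
two-sided equivalences `C₁ k ≤ k_α ≤ C₂ k` and `C₃ k' ≤ k_β ≤ C₄ k'` for some
`0 < α < β < 1`, the endpoints are equivalent: `c k ≤ k' ≤ C k` for some `c, C > 0`. -/
theorem endpoints_equivalent_of_interpolation
    {M : Type*} (k k' : M → M → ℝ → ℝ) (kfam : ℝ → M → M → ℝ → ℝ)
    (α β C₁ C₂ C₃ C₄ : ℝ)
    (hα : 0 < α) (hαβ : α < β) (hβ : β < 1)
    (hC₁ : 0 < C₁) (hC₂ : 0 < C₂) (hC₃ : 0 < C₃) (hC₄ : 0 < C₄)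
    (hk_pos : ∀ x y t, 0 < t → 0 < k x y t)
    (hk'_pos : ∀ x y t, 0 < t → 0 < k' x y t)
    (hfam_pos : ∀ θ : ℝ, 0 ≤ θ → θ ≤ 1 → ∀ x y t, 0 < t → 0 < kfam θ x y t)
    (hend0 : kfam 0 = k) (hend1 : kfam 1 = k')
    (hinterp : ∀ θ : ℝ, 0 ≤ θ → θ ≤ 1 → ∀ x y t, 0 < t →
      kfam θ x y t ≤ (k x y t) ^ (1 - θ) * (k' x y t) ^ θ)
    (hαlow : ∀ x y t, 0 < t → C₁ * k x y t ≤ kfam α x y t)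
    (hαhigh : ∀ x y t, 0 < t → kfam α x y t ≤ C₂ * k x y t)
    (hβlow : ∀ x y t, 0 < t → C₃ * k' x y t ≤ kfam β x y t)
    (hβhigh : ∀ x y t, 0 < t → kfam β x y t ≤ C₄ * k' x y t) :
    ∃ c C : ℝ, 0 < c ∧ 0 < C ∧
      ∀ x y t, 0 < t → c * k x y t ≤ k' x y t ∧ k' x y t ≤ C * k x y t :=
  endpoints_equivalent_of_interpolation_general k k' kfam α β C₁ C₃ hα hαβ hβ hC₁ hC₃ hk_pos hk'_pos
    hinterp hαlow hβlow
end

section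
/- Let k be a positive kernel on M × M × (0,∞) and V ≥ 0 a potential. Suppose k' is another positive kernel satisfying the resolvent identity k'(x,y,t) = k(x,y,t) − ∫_0^t ∫_M k(x,z,t−s) V(z) k'(z,y,s) dz ds, and that k ≤ C k' pointwise for some C > 0. Then k satisfies the 3k-inequality with respect to V with constant C: ∫_0^t ∫_M k(x,z,t−s) V(z) k(z,y,s) dz ds ≤ C k(x,y,t) for all x, y ∈ M and t > 0. -/
open MeasureTheory

theorem integral_le_const_mul_integral_of_nonneg {α : Type*} [MeasurableSpace α]
    {μ : Measure α} {f g : α → ℝ} {C : ℝ} (hf : 0 ≤ᵐ[μ] f) (hg : Integrable g μ)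
    (hfg : ∀ᵐ a ∂μ, f a ≤ C * g a) : ∫ a, f a ∂μ ≤ C * ∫ a, g a ∂μ := by
  rw [← integral_const_mul]
  exact integral_mono_of_nonneg hf (hg.const_mul C) hfg

section Duhamel

variable {M : Type*} [MeasurableSpace M]

noncomputable def duhamel (μ : Measure M) (k : M → M → ℝ → ℝ) (V : M → ℝ)
    (l : M → M → ℝ → ℝ) (x y : M) (t : ℝ) : ℝ :=
  ∫ s in Set.Ioo 0 t, ∫ z, k x z (t - s) * V z * l z y s ∂μ

variable {μ : Measure M} {k l₁ l₂ : M → M → ℝ → ℝ} {V : M → ℝ}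

theorem duhamel_le_const_mul (C : ℝ) (x y : M) {t : ℝ}
    (hk : ∀ x y t, 0 < t → 0 ≤ k x y t) (hV : ∀ z, 0 ≤ V z)
    (hl₁ : ∀ x y t, 0 < t → 0 ≤ l₁ x y t)
    (hl : ∀ x y t, 0 < t → l₁ x y t ≤ C * l₂ x y t)
    (hint : IntegrableOn (fun s => ∫ z, k x z (t - s) * V z * l₂ z y s ∂μ) (Set.Ioo 0 t))
    (hint' : ∀ s ∈ Set.Ioo 0 t, Integrable (fun z => k x z (t - s) * V z * l₂ z y s) μ) :
    duhamel μ k V l₁ x y t ≤ C * duhamel μ k V l₂ x y t := by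
  have hintegrand_nonneg : ∀ s ∈ Set.Ioo 0 t, ∀ z, 0 ≤ k x z (t - s) * V z * l₁ z y s :=
    fun s hs z => mul_nonneg (mul_nonneg (hk x z _ (sub_pos.2 hs.2)) (hV z)) (hl₁ z y s hs.1)
  have hinner : ∀ s ∈ Set.Ioo 0 t, ∫ z, k x z (t - s) * V z * l₁ z y s ∂μ ≤
      C * ∫ z, k x z (t - s) * V z * l₂ z y s ∂μ := by
    intro s hs
    refine integral_le_const_mul_integral_of_nonneg
      (ae_of_all _ (hintegrand_nonneg s hs)) (hint' s hs) (ae_of_all _ fun z => ?_)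
    calc k x z (t - s) * V z * l₁ z y s ≤ k x z (t - s) * V z * (C * l₂ z y s) :=
          mul_le_mul_of_nonneg_left (hl z y s hs.1)
            (mul_nonneg (hk x z _ (sub_pos.2 hs.2)) (hV z))
      _ = C * (k x z (t - s) * V z * l₂ z y s) := by ring
  refine integral_le_const_mul_integral_of_nonneg ?_ hint ?_
  · filter_upwards [ae_restrict_mem measurableSet_Ioo] with s hs
    exact integral_nonneg (hintegrand_nonneg s hs)
  · filter_upwards [ae_restrict_mem measurableSet_Ioo] with s hs
    exact hinner s hs

end Duhamel

/-- If `k'` satisfies the resolvent (Duhamel) identity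
`k'(x,y,t) = k(x,y,t) − ∫_0^t ∫_M k(x,z,t−s) V(z) k'(z,y,s) dz ds` with `V ≥ 0`,
and `k ≤ C k'` pointwise, then `k` satisfies the `3k`-inequality with constant `C`. -/
theorem resolvent_identity_implies_3k
    {M : Type*} [MeasurableSpace M] (μ : Measure M)
    (k k' : M → M → ℝ → ℝ) (V : M → ℝ) (C : ℝ) (hC : 0 < C)
    (hk_pos : ∀ x y t, 0 < t → 0 < k x y t)
    (hk'_pos : ∀ x y t, 0 < t → 0 < k' x y t)
    (hV : ∀ z, 0 ≤ V z)
    (hint : ∀ x y t, 0 < t →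
      IntegrableOn (fun s : ℝ => ∫ z, k x z (t - s) * V z * k' z y s ∂μ)
        (Set.Ioo 0 t))
    (hint' : ∀ x y t s, 0 < s → s < t →
      Integrable (fun z => k x z (t - s) * V z * k' z y s) μ)
    (hres : ∀ x y t, 0 < t →
      k' x y t = k x y t -
        ∫ s in Set.Ioo (0 : ℝ) t, ∫ z, k x z (t - s) * V z * k' z y s ∂μ)
    (hcomp : ∀ x y t, 0 < t → k x y t ≤ C * k' x y t) :
    ∀ x y t, 0 < t →
      (∫ s in Set.Ioo (0 : ℝ) t, ∫ z, k x z (t - s) * V z * k z y s ∂μ)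
        ≤ C * k x y t := by
  intro x y t ht
  have hk_nonneg : ∀ x y t, 0 < t → 0 ≤ k x y t := fun x y t ht => (hk_pos x y t ht).le
  have hresolvent : duhamel μ k V k' x y t = k x y t - k' x y t := by
    rw [duhamel]
    linarith [hres x y t ht]
  calc duhamel μ k V k x y t
      ≤ C * duhamel μ k V k' x y t :=
        duhamel_le_const_mul C x y hk_nonneg hV hk_nonneg hcomp (hint x y t ht)
          fun s hs => hint' x y t s hs.1 hs.2
    _ = C * (k x y t - k' x y t) := by rw [hresolvent]
    _ ≤ C * k x y t := by
        gcongr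
        linarith [hk'_pos x y t ht]
end
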